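/- arXiv:2110.08054 — 2 statements merged into one kernel-verified Lean document; each statement's English description precedes it below -/
import Mathlib

section
/- Consider a nonautonomous system ẋ(t) = f(x(t), t) on ℝ^d with f piecewise continuous in t, locally Lipschitz in x, and f(0, t) = 0. Suppose there exists a function 𝓛(t, x) ≥ 0 with λ₁‖x‖² ≤ 𝓛(t, x) ≤ λ₂‖x‖² (λ₁, λ₂ > 0) such that along every solution x(t), writing 𝓛_x(t) = 𝓛(t, x(t)): (a) d𝓛_x(t)/dt ≤ −γ x(t)ᵀ Σ(t) x(t), where Σ(t) is positive semidefinite with ‖Σ(t)‖ ≤ λ_Σ and γ = γ(x(0)) > 0; (b) Σ(t) is persistently exciting with constants T, μ > 0; and (c) d𝓛_x(t)/dt ≤ −(1/c)‖f(x(t), t)‖² for some c > 0. Then the origin x = 0 is exponentially stable, and every solution satisfies ‖x(t)‖ ≤ √(λ₂/(λ₁(1−σ))) ‖x(0)‖ exp(−σ t/(2T)), where σ = 1/((1+ρ)(1+ρ c T² γ λ_Σ)) and ρ = λ₂/(μ T γ); in particular 0 < σ < 1. -/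
/-!
Along a solution, `V(t) = 𝓛(t, x(t))` is nonincreasing, and it suffices to show that `V` loses
the fraction `σ` of its value over every window `[a, a + T]`; iterating this gives the exponential
bound. Write `Δ = V(a) - V(a + T)`. Condition (c) confines the solution to
`‖x(τ) - x(a)‖² ≤ c T Δ` on the window, and condition (a) gives `γ ∫ xᵀΣx ≤ Δ`. Persistent
excitation, applied to the frozen vector `x(a)`, combined with
`wᵀΣw ≤ (1 + r) vᵀΣv + (1 + 1/r) (w - v)ᵀΣ(w - v)` for `r = ρ c T² γ λ_Σ`, yields
`V(a) ≤ λ₂ ‖x(a)‖² ≤ Δ / σ`.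
-/

open Matrix MeasureTheory

noncomputable section

/-- Euclidean norm of a finite-dimensional real vector. -/
def euclNorm {ι : Type*} [Fintype ι] (x : ι → ℝ) : ℝ := Real.sqrt (∑ i, x i * x i)

/-- The constant `ρ = λ₂/(μTγ)`. -/
def rhoPE (lam2 μ T γ : ℝ) : ℝ := lam2 / (μ * T * γ)

/-- The constant `σ = 1/((1+ρ)(1+ρcT²γλ_Σ))`. -/
def sigmaPE (ρ c T γ lamS : ℝ) : ℝ := 1 / ((1 + ρ) * (1 + ρ * c * T ^ 2 * γ * lamS))

open Set

theorem antitoneOn_of_hasDerivAt_nonpos {D : Set ℝ} (hD : Convex ℝ D) {f f' : ℝ → ℝ}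
    (hf : ∀ x ∈ D, HasDerivAt f (f' x) x) (hf' : ∀ x ∈ D, f' x ≤ 0) : AntitoneOn f D :=
  antitoneOn_of_hasDerivWithinAt_nonpos hD (fun x hx => (hf x hx).continuousAt.continuousWithinAt)
    (fun x hx => (hf x (interior_subset hx)).hasDerivWithinAt)
    fun x hx => hf' x (interior_subset hx)

theorem norm_sub_sq_le_of_hasDerivAt {E : Type*} [NormedAddCommGroup E] [InnerProductSpace ℝ E]
    {x x' : ℝ → E} {V V' : ℝ → ℝ} {a b c : ℝ} (hab : a ≤ b) (hc : 0 < c)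
    (hx : ∀ t ∈ Icc a b, HasDerivAt x (x' t) t) (hV : ∀ t ∈ Icc a b, HasDerivAt V (V' t) t)
    (hV' : ∀ t ∈ Icc a b, V' t ≤ -(1 / c) * ‖x' t‖ ^ 2) :
    ‖x b - x a‖ ^ 2 ≤ c * (b - a) * (V a - V b) := by
  rcases hab.eq_or_lt with rfl | hlt
  · simp
  set T := b - a with hTdef
  have hT : 0 < T := sub_pos.2 hlt
  set v := x b - x a
  set N := ‖v‖ ^ 2
  -- `F` is nonincreasing: by AM-GM, `⟪v, x'⟫ ≤ N / (2T) + T/2 ‖x'‖²`, and `c T/2 V' ≤ -T/2 ‖x'‖²`.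
  let F : ℝ → ℝ := fun s => inner ℝ v (x s) - N / (2 * T) * s + c * T / 2 * V s
  have hF : ∀ s ∈ Icc a b,
      HasDerivAt F (inner ℝ v (x' s) - N / (2 * T) + c * T / 2 * V' s) s := by
    intro s hs
    have hinner : HasDerivAt (fun s => inner ℝ v (x s)) (inner ℝ v (x' s)) s := by
      simpa using (hasDerivAt_const s v).inner ℝ (hx s hs)
    have hlin : HasDerivAt (fun s => N / (2 * T) * s) (N / (2 * T)) s := by
      simpa using (hasDerivAt_id s).const_mul (N / (2 * T))
    exact (hinner.sub hlin).add
      ((hV s hs).const_mul (c * T / 2))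
  have hF' : ∀ s ∈ Icc a b, inner ℝ v (x' s) - N / (2 * T) + c * T / 2 * V' s ≤ 0 := by
    intro s hs
    have hcs : ‖v‖ * ‖x' s‖ ≤ N / (2 * T) + T / 2 * ‖x' s‖ ^ 2 := by
      rw [div_add' _ _ _ (by positivity), le_div_iff₀ (by positivity)]
      nlinarith [sq_nonneg (‖v‖ - T * ‖x' s‖)]
    have hcV : c * T / 2 * V' s ≤ -(T / 2) * ‖x' s‖ ^ 2 := by
      calc c * T / 2 * V' s ≤ c * T / 2 * (-(1 / c) * ‖x' s‖ ^ 2) :=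
            mul_le_mul_of_nonneg_left (hV' s hs) (by positivity)
        _ = -(T / 2) * ‖x' s‖ ^ 2 := by field_simp
    linarith [real_inner_le_norm v (x' s)]
  have hFab : F b ≤ F a := antitoneOn_of_hasDerivAt_nonpos (convex_Icc a b) hF hF'
    ⟨le_rfl, hlt.le⟩ ⟨hlt.le, le_rfl⟩ hlt.le
  have hN : inner ℝ v (x b) - inner ℝ v (x a) = N := by
    rw [← inner_sub_right, real_inner_self_eq_norm_sq]
  simp only [F] at hFab
  have hTN : N / (2 * T) * b - N / (2 * T) * a = N / 2 := by
    rw [← mul_sub, ← hTdef]; field_simp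
  linarith

theorem dotProduct_mulVec_comm {ι : Type*} [Fintype ι] {M : Matrix ι ι ℝ} (hM : Mᵀ = M)
    (u v : ι → ℝ) : u ⬝ᵥ M *ᵥ v = v ⬝ᵥ M *ᵥ u := by
  rw [dotProduct_mulVec, ← mulVec_transpose, hM, dotProduct_comm]

theorem Matrix.PosSemidef.transpose_eq {ι : Type*} [Fintype ι] {M : Matrix ι ι ℝ}
    (hM : M.PosSemidef) : Mᵀ = M := by
  simpa using hM.isHermitian.eq

theorem dotProduct_mulVec_add_add {ι : Type*} [Fintype ι] {M : Matrix ι ι ℝ} (hM : Mᵀ = M)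
    (u v : ι → ℝ) :
    (u + v) ⬝ᵥ M *ᵥ (u + v) = u ⬝ᵥ M *ᵥ u + 2 * (u ⬝ᵥ M *ᵥ v) + v ⬝ᵥ M *ᵥ v := by
  simp only [mulVec_add, dotProduct_add, add_dotProduct, dotProduct_mulVec_comm hM v u]
  ring

theorem Matrix.PosSemidef.dotProduct_mulVec_le_add {ι : Type*} [Fintype ι] {M : Matrix ι ι ℝ}
    (hM : M.PosSemidef) (v w : ι → ℝ) {r : ℝ} (hr : 0 < r) :
    w ⬝ᵥ M *ᵥ w ≤ (1 + r) * (v ⬝ᵥ M *ᵥ v) + (1 + r⁻¹) * ((w - v) ⬝ᵥ M *ᵥ (w - v)) := by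
  have hT := hM.transpose_eq
  set u := w - v
  have hw : w = v + u := by simp [u]
  have hexp := dotProduct_mulVec_add_add hT v u
  -- `0 ≤ q(u - r v)` is the weighted AM-GM bound on the cross term `2 ⟪v, u⟫_M`.
  have hnn := hM.dotProduct_mulVec_nonneg (u + (-r) • v)
  simp only [star_trivial, dotProduct_mulVec_add_add hT, mulVec_smul, dotProduct_smul,
    smul_dotProduct, smul_eq_mul, dotProduct_mulVec_comm hT u v] at hnn
  rw [hw, hexp]
  have hcross : 2 * (v ⬝ᵥ M *ᵥ u) ≤ r * (v ⬝ᵥ M *ᵥ v) + r⁻¹ * (u ⬝ᵥ M *ᵥ u) := by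
    have hid : r * (r * (v ⬝ᵥ M *ᵥ v) + r⁻¹ * (u ⬝ᵥ M *ᵥ u) - 2 * (v ⬝ᵥ M *ᵥ u)) =
        u ⬝ᵥ M *ᵥ u + 2 * (-r * (v ⬝ᵥ M *ᵥ u)) + -r * (-r * (v ⬝ᵥ M *ᵥ v)) := by
      field_simp; ring
    have := nonneg_of_mul_nonneg_right (hid ▸ hnn) hr
    linarith
  linarith

theorem Matrix.PosSemidef.abs_apply_le {ι : Type*} [Fintype ι] [DecidableEq ι]
    {M : Matrix ι ι ℝ} (hM : M.PosSemidef) {lam : ℝ} (hlam : 0 ≤ lam)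
    (hbound : ∀ z : ι → ℝ, z ⬝ᵥ M *ᵥ z ≤ lam * (z ⬝ᵥ z)) (i j : ι) : |M i j| ≤ lam := by
  set u : ι → ℝ := Pi.single i 1
  set v : ι → ℝ := Pi.single j 1
  have hT := hM.transpose_eq
  have huv : u ⬝ᵥ M *ᵥ v = M i j := by simp [u, v, mulVec_single, single_dotProduct]
  have hu : u ⬝ᵥ u = 1 := by simp [u]
  have hv : v ⬝ᵥ v = 1 := by simp [v]
  -- polarization: `4 M i j = q(u + v) - q(u - v)`, and `|u ± v|² ≤ 2 |u|² + 2 |v|² = 4`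
  have hplus := dotProduct_mulVec_add_add hT u v
  have hminus := dotProduct_mulVec_add_add hT u (-v)
  have hpar : (u + v) ⬝ᵥ (u + v) + (u + -v) ⬝ᵥ (u + -v) = 4 := by
    simp only [add_dotProduct, dotProduct_add, neg_dotProduct, dotProduct_neg, hu, hv,
      dotProduct_comm v u]
    ring
  simp only [mulVec_neg, dotProduct_neg, neg_dotProduct, neg_neg, huv] at hminus
  rw [huv] at hplus
  have h1 := hbound (u + v)
  have h2 := hbound (u + -v)
  have h3 := hM.dotProduct_mulVec_nonneg (u + v)
  have h4 := hM.dotProduct_mulVec_nonneg (u + -v)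
  have h5 := dotProduct_self_star_nonneg (u + v)
  have h6 := dotProduct_self_star_nonneg (u + -v)
  simp only [star_trivial] at h3 h4 h5 h6
  rw [abs_le]
  constructor <;> nlinarith

theorem intervalIntegrable_apply_of_posSemidef {ι : Type*} [Fintype ι] [DecidableEq ι]
    {Sig : ℝ → Matrix ι ι ℝ} {a b lam : ℝ} (hab : a ≤ b) (hlam : 0 ≤ lam)
    (hmeas : ∀ i j, Measurable fun t => Sig t i j)
    (hpsd : ∀ t ∈ Icc a b, (Sig t).PosSemidef)
    (hbound : ∀ t ∈ Icc a b, ∀ z : ι → ℝ, z ⬝ᵥ Sig t *ᵥ z ≤ lam * (z ⬝ᵥ z)) (i j : ι) :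
    IntervalIntegrable (fun t => Sig t i j) volume a b := by
  refine (intervalIntegrable_const (c := lam)).mono_fun (hmeas i j).aestronglyMeasurable ?_
  rw [uIoc_of_le hab]
  refine (ae_restrict_iff' measurableSet_Ioc).2 (Filter.Eventually.of_forall fun t ht => ?_)
  have ht' := Ioc_subset_Icc_self ht
  simpa [abs_of_nonneg hlam] using (hpsd t ht').abs_apply_le hlam (hbound t ht') i j

theorem IntervalIntegrable.fun_finsetSum {ι : Type*} {s : Finset ι} {g : ι → ℝ → ℝ} {a b : ℝ}
    (h : ∀ i ∈ s, IntervalIntegrable (g i) volume a b) :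
    IntervalIntegrable (fun t => ∑ i ∈ s, g i t) volume a b := by
  simpa only [Finset.sum_fn] using IntervalIntegrable.sum s h

theorem intervalIntegrable_dotProduct_mulVec {ι : Type*} [Fintype ι]
    {Sig : ℝ → Matrix ι ι ℝ} {u v : ℝ → ι → ℝ} {a b : ℝ}
    (hSig : ∀ i j, IntervalIntegrable (fun t => Sig t i j) volume a b)
    (hu : ContinuousOn u (uIcc a b)) (hv : ContinuousOn v (uIcc a b)) :
    IntervalIntegrable (fun t => u t ⬝ᵥ Sig t *ᵥ v t) volume a b := by
  simp only [dotProduct, mulVec, Finset.mul_sum]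
  refine .fun_finsetSum fun i _ => .fun_finsetSum fun j _ => ?_
  exact ((hSig i j).mul_continuousOn (continuousOn_pi.1 hv j)).continuousOn_mul
    (continuousOn_pi.1 hu i)

theorem intervalIntegral_dotProduct_mulVec {ι : Type*} [Fintype ι]
    {Sig : ℝ → Matrix ι ι ℝ} {a b : ℝ}
    (hSig : ∀ i j, IntervalIntegrable (fun t => Sig t i j) volume a b) (u v : ι → ℝ) :
    ∫ t in a..b, u ⬝ᵥ Sig t *ᵥ v = u ⬝ᵥ (of fun i j => ∫ t in a..b, Sig t i j) *ᵥ v := by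
  have hint : ∀ i j, IntervalIntegrable (fun t => u i * (Sig t i j * v j)) volume a b :=
    fun i j => ((hSig i j).mul_const _).const_mul _
  simp only [dotProduct, mulVec, of_apply, Finset.mul_sum]
  rw [intervalIntegral.integral_finsetSum fun i _ => .fun_finsetSum fun j _ => hint i j]
  refine Finset.sum_congr rfl fun i _ => ?_
  rw [intervalIntegral.integral_finsetSum fun j _ => hint i j]
  refine Finset.sum_congr rfl fun j _ => ?_
  rw [intervalIntegral.integral_const_mul, intervalIntegral.integral_mul_const]

theorem mul_dotProduct_self_le_integral_of_persistentlyExciting {ι : Type*} [Fintype ι]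
    [DecidableEq ι] {Sig : ℝ → Matrix ι ι ℝ} {a T μ : ℝ} (hT : 0 < T)
    (hSig : ∀ i j, IntervalIntegrable (fun t => Sig t i j) volume a (a + T))
    (hPE : ((T⁻¹ • of fun i j => ∫ t in a..(a + T), Sig t i j) - μ • (1 : Matrix ι ι ℝ)).PosSemidef)
    (z : ι → ℝ) : μ * T * (z ⬝ᵥ z) ≤ ∫ t in a..(a + T), z ⬝ᵥ Sig t *ᵥ z := by
  have h := hPE.dotProduct_mulVec_nonneg z
  simp only [star_trivial, sub_mulVec, smul_mulVec, one_mulVec, dotProduct_sub,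
    dotProduct_smul, smul_eq_mul, ← intervalIntegral_dotProduct_mulVec hSig] at h
  calc μ * T * (z ⬝ᵥ z) = T * (μ * (z ⬝ᵥ z)) := by ring
    _ ≤ T * (T⁻¹ * ∫ t in a..(a + T), z ⬝ᵥ Sig t *ᵥ z) :=
      mul_le_mul_of_nonneg_left (sub_nonneg.1 h) hT.le
    _ = ∫ t in a..(a + T), z ⬝ᵥ Sig t *ᵥ z := by field_simp

theorem sigmaPE_mem_Ioo {ρ c T γ lamS : ℝ} (hρ : 0 < ρ) (hA : 0 ≤ ρ * c * T ^ 2 * γ * lamS) :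
    sigmaPE ρ c T γ lamS ∈ Ioo 0 1 := by
  have hprod : 1 < (1 + ρ) * (1 + ρ * c * T ^ 2 * γ * lamS) := by nlinarith
  exact ⟨by unfold sigmaPE; positivity, by rw [sigmaPE, div_lt_one (by linarith)]; exact hprod⟩

theorem sigmaPE_eq_inv {ρ c T γ lamS : ℝ} (hρ : ρ ≠ 0) (hA : c * T ^ 2 * γ * lamS ≠ 0) :
    sigmaPE ρ c T γ lamS = (ρ * (1 + ρ * (c * T ^ 2 * γ * lamS)
      + (1 + (ρ * (c * T ^ 2 * γ * lamS))⁻¹) * (c * T ^ 2 * γ * lamS)))⁻¹ := by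
  rw [sigmaPE, one_div, show ρ * c * T ^ 2 * γ * lamS = ρ * (c * T ^ 2 * γ * lamS) by ring]
  generalize c * T ^ 2 * γ * lamS = A at hA ⊢
  congr 1
  field_simp
  ring

theorem euclNorm_eq_norm_toLp {ι : Type*} [Fintype ι] (z : ι → ℝ) :
    euclNorm z = ‖(WithLp.toLp 2 z : EuclideanSpace ℝ ι)‖ := by
  simp [euclNorm, EuclideanSpace.norm_eq, sq]

theorem euclNorm_nonneg {ι : Type*} [Fintype ι] (z : ι → ℝ) : 0 ≤ euclNorm z :=
  Real.sqrt_nonneg _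

theorem euclNorm_sq {ι : Type*} [Fintype ι] (z : ι → ℝ) : euclNorm z ^ 2 = z ⬝ᵥ z :=
  Real.sq_sqrt (Finset.sum_nonneg fun i _ => mul_self_nonneg (z i))

theorem euclNorm_sub_sq_le_of_hasDerivAt {ι : Type*} [Fintype ι] {x x' : ℝ → ι → ℝ}
    {V V' : ℝ → ℝ} {a b c : ℝ} (hab : a ≤ b) (hc : 0 < c)
    (hx : ∀ t ∈ Icc a b, HasDerivAt x (x' t) t) (hV : ∀ t ∈ Icc a b, HasDerivAt V (V' t) t)
    (hV' : ∀ t ∈ Icc a b, V' t ≤ -(1 / c) * euclNorm (x' t) ^ 2) :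
    euclNorm (x b - x a) ^ 2 ≤ c * (b - a) * (V a - V b) := by
  simp only [euclNorm_eq_norm_toLp] at hV' ⊢
  refine norm_sub_sq_le_of_hasDerivAt (x := fun t => WithLp.toLp 2 (x t)) hab hc
    (fun t ht => ?_) hV hV'
  exact (PiLp.continuousLinearEquiv 2 ℝ (fun _ : ι => ℝ)).symm.hasFDerivAt.comp_hasDerivAt t
    (hx t ht)

theorem dotProduct_sub_le_of_hasDerivAt {ι : Type*} [Fintype ι] {x x' : ℝ → ι → ℝ}
    {V V' : ℝ → ℝ} {a b c : ℝ} (hc : 0 < c)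
    (hx : ∀ t ∈ Icc a b, HasDerivAt x (x' t) t) (hV : ∀ t ∈ Icc a b, HasDerivAt V (V' t) t)
    (hV' : ∀ t ∈ Icc a b, V' t ≤ -(1 / c) * euclNorm (x' t) ^ 2) :
    ∀ t ∈ Icc a b, (x a - x t) ⬝ᵥ (x a - x t) ≤ c * (b - a) * (V a - V b) := by
  intro t ht
  have hanti : AntitoneOn V (Icc a b) :=
    antitoneOn_of_hasDerivAt_nonpos (convex_Icc _ _) hV fun s hs =>
      (hV' s hs).trans (mul_nonpos_of_nonpos_of_nonneg (by simp [hc.le]) (sq_nonneg _))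
  have hsub : Icc a t ⊆ Icc a b := Icc_subset_Icc_right ht.2
  have hinc := euclNorm_sub_sq_le_of_hasDerivAt ht.1 hc (fun s hs => hx s (hsub hs))
    (fun s hs => hV s (hsub hs)) (fun s hs => hV' s (hsub hs))
  rw [euclNorm_sq, ← neg_sub, neg_dotProduct, dotProduct_neg, neg_neg] at hinc
  have hab : a ≤ b := ht.1.trans ht.2
  have hVb : V b ≤ V t := hanti ht ⟨hab, le_rfl⟩ ht.2
  have hVt : V t ≤ V a := hanti ⟨le_rfl, hab⟩ ht ht.1
  calc (x a - x t) ⬝ᵥ (x a - x t) ≤ c * (t - a) * (V a - V t) := hinc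
    _ ≤ c * (b - a) * (V a - V b) := by
      gcongr
      linarith [ht.2]

theorem integral_dotProduct_mulVec_le_of_near {ι : Type*} [Fintype ι]
    {Sig : ℝ → Matrix ι ι ℝ} {u : ℝ → ι → ℝ} {w : ι → ℝ} {a b lam δ r : ℝ}
    (hab : a ≤ b) (hlam : 0 ≤ lam) (hr : 0 < r)
    (hSig : ∀ i j, IntervalIntegrable (fun t => Sig t i j) volume a b)
    (hpsd : ∀ t ∈ Icc a b, (Sig t).PosSemidef)
    (hbound : ∀ t ∈ Icc a b, ∀ z : ι → ℝ, z ⬝ᵥ Sig t *ᵥ z ≤ lam * (z ⬝ᵥ z))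
    (hu : ContinuousOn u (Icc a b)) (hnear : ∀ t ∈ Icc a b, (w - u t) ⬝ᵥ (w - u t) ≤ δ) :
    ∫ t in a..b, w ⬝ᵥ Sig t *ᵥ w
      ≤ (1 + r) * (∫ t in a..b, u t ⬝ᵥ Sig t *ᵥ u t) + (1 + r⁻¹) * ((b - a) * (lam * δ)) := by
  rw [← uIcc_of_le hab] at hu
  have hw : ContinuousOn (fun _ : ℝ => w) (uIcc a b) := continuousOn_const
  have hQ := intervalIntegrable_dotProduct_mulVec hSig hu hu
  have hD : IntervalIntegrable (fun t => (w - u t) ⬝ᵥ Sig t *ᵥ (w - u t)) volume a b :=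
    intervalIntegrable_dotProduct_mulVec hSig (hw.sub hu) (hw.sub hu)
  have hD_le : ∫ t in a..b, (w - u t) ⬝ᵥ Sig t *ᵥ (w - u t) ≤ (b - a) * (lam * δ) :=
    calc ∫ t in a..b, (w - u t) ⬝ᵥ Sig t *ᵥ (w - u t) ≤ ∫ _ in a..b, lam * δ :=
          intervalIntegral.integral_mono_on hab hD intervalIntegrable_const
            fun t ht => (hbound t ht _).trans (mul_le_mul_of_nonneg_left (hnear t ht) hlam)
      _ = (b - a) * (lam * δ) := by rw [intervalIntegral.integral_const, smul_eq_mul]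
  calc ∫ t in a..b, w ⬝ᵥ Sig t *ᵥ w
      ≤ ∫ t in a..b, ((1 + r) * (u t ⬝ᵥ Sig t *ᵥ u t)
          + (1 + r⁻¹) * ((w - u t) ⬝ᵥ Sig t *ᵥ (w - u t))) :=
        intervalIntegral.integral_mono_on hab (intervalIntegrable_dotProduct_mulVec hSig hw hw)
          ((hQ.const_mul _).add (hD.const_mul _))
          fun t ht => (hpsd t ht).dotProduct_mulVec_le_add (u t) w hr
    _ ≤ (1 + r) * (∫ t in a..b, u t ⬝ᵥ Sig t *ᵥ u t) + (1 + r⁻¹) * ((b - a) * (lam * δ)) := by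
        rw [intervalIntegral.integral_add (hQ.const_mul _) (hD.const_mul _),
          intervalIntegral.integral_const_mul, intervalIntegral.integral_const_mul]
        gcongr

theorem integral_le_sub_of_hasDerivAt_le_neg {V V' q : ℝ → ℝ} {a b : ℝ} (hab : a ≤ b)
    (hV : ∀ t ∈ Icc a b, HasDerivAt V (V' t) t) (hq : IntervalIntegrable q volume a b)
    (hle : ∀ t ∈ Icc a b, V' t ≤ -q t) : ∫ t in a..b, q t ≤ V a - V b := by
  have hFTC := intervalIntegral.sub_le_integral_of_hasDeriv_right_of_le hab
    (fun t ht => (hV t ht).continuousAt.continuousWithinAt)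
    (fun t ht => (hV t (Ioo_subset_Icc_self ht)).hasDerivWithinAt)
    ((intervalIntegrable_iff_integrableOn_Icc_of_le hab).1 hq.neg)
    (fun t ht => hle t (Ioo_subset_Icc_self ht))
  rw [Pi.neg_def, intervalIntegral.integral_neg] at hFTC
  linarith

theorem le_one_sub_sigmaPE_mul_of_window {ι : Type*} [Fintype ι] {Sig : ℝ → Matrix ι ι ℝ}
    {x x' : ℝ → ι → ℝ} {V V' : ℝ → ℝ} {lam2 lamS γ c T μ a : ℝ}
    (hlam2 : 0 < lam2) (hlamS : 0 < lamS) (hγ : 0 < γ) (hc : 0 < c) (hT : 0 < T) (hμ : 0 < μ)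
    (hSig : ∀ i j, IntervalIntegrable (fun t => Sig t i j) volume a (a + T))
    (hpsd : ∀ t ∈ Icc a (a + T), (Sig t).PosSemidef)
    (hbound : ∀ t ∈ Icc a (a + T), ∀ z : ι → ℝ, z ⬝ᵥ Sig t *ᵥ z ≤ lamS * (z ⬝ᵥ z))
    (hPE : μ * T * (x a ⬝ᵥ x a) ≤ ∫ t in a..(a + T), x a ⬝ᵥ Sig t *ᵥ x a)
    (hVa : V a ≤ lam2 * (x a ⬝ᵥ x a))
    (hx : ∀ t ∈ Icc a (a + T), HasDerivAt x (x' t) t)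
    (hV : ∀ t ∈ Icc a (a + T), HasDerivAt V (V' t) t)
    (hdiss : ∀ t ∈ Icc a (a + T), V' t ≤ -γ * (x t ⬝ᵥ Sig t *ᵥ x t))
    (hflow : ∀ t ∈ Icc a (a + T), V' t ≤ -(1 / c) * euclNorm (x' t) ^ 2) :
    V (a + T) ≤ (1 - sigmaPE (rhoPE lam2 μ T γ) c T γ lamS) * V a := by
  have hab : a ≤ a + T := by linarith
  set Δ := V a - V (a + T)
  set ρ := rhoPE lam2 μ T γ
  set A := c * T ^ 2 * γ * lamS
  have hρ : 0 < ρ := div_pos hlam2 (by positivity)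
  have hA : 0 < A := by positivity
  have hnear : ∀ t ∈ Icc a (a + T), (x a - x t) ⬝ᵥ (x a - x t) ≤ c * T * Δ := by
    simpa only [add_sub_cancel_left] using
      dotProduct_sub_le_of_hasDerivAt (b := a + T) hc hx hV hflow
  have hcont : ContinuousOn x (Icc a (a + T)) :=
    fun t ht => (hx t ht).continuousAt.continuousWithinAt
  have hQint : IntervalIntegrable (fun t => x t ⬝ᵥ Sig t *ᵥ x t) volume a (a + T) := by
    rw [← uIcc_of_le hab] at hcont
    exact intervalIntegrable_dotProduct_mulVec hSig hcont hcont
  have hQ : γ * ∫ t in a..(a + T), x t ⬝ᵥ Sig t *ᵥ x t ≤ Δ := by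
    rw [← intervalIntegral.integral_const_mul]
    exact integral_le_sub_of_hasDerivAt_le_neg hab hV (hQint.const_mul γ)
      fun t ht => (hdiss t ht).trans_eq (neg_mul _ _)
  have hW := integral_dotProduct_mulVec_le_of_near hab hlamS.le (mul_pos hρ hA) hSig hpsd hbound
    hcont hnear
  suffices sigmaPE ρ c T γ lamS * V a ≤ Δ by linarith
  rw [sigmaPE_eq_inv hρ.ne' hA.ne', ← div_eq_inv_mul, div_le_iff₀ (by positivity)]
  have hD : γ * ((a + T - a) * (lamS * (c * T * Δ))) = A * Δ := by simp only [A]; ring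
  have hlam2_eq : lam2 = ρ * γ * (μ * T) := by simp only [ρ, rhoPE]; field_simp
  calc V a ≤ lam2 * (x a ⬝ᵥ x a) := hVa
    _ = ρ * γ * (μ * T * (x a ⬝ᵥ x a)) := by rw [hlam2_eq]; ring
    _ ≤ ρ * γ * ((1 + ρ * A) * (∫ t in a..(a + T), x t ⬝ᵥ Sig t *ᵥ x t)
          + (1 + (ρ * A)⁻¹) * ((a + T - a) * (lamS * (c * T * Δ)))) := by
        gcongr; exact hPE.trans hW
    _ = ρ * (1 + ρ * A) * (γ * ∫ t in a..(a + T), x t ⬝ᵥ Sig t *ᵥ x t)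
          + ρ * (1 + (ρ * A)⁻¹) * (A * Δ) := by rw [← hD]; ring
    _ ≤ ρ * (1 + ρ * A) * Δ + ρ * (1 + (ρ * A)⁻¹) * (A * Δ) := by gcongr
    _ = Δ * (ρ * (1 + ρ * A + (1 + (ρ * A)⁻¹) * A)) := by ring

theorem AntitoneOn.le_div_mul_exp_of_le_mul {V : ℝ → ℝ} {σ T : ℝ}
    (hanti : AntitoneOn V (Ici 0)) (hT : 0 < T) (hσ : σ ∈ Ioo 0 1) (hV0 : 0 ≤ V 0)
    (hstep : ∀ t, 0 ≤ t → V (t + T) ≤ (1 - σ) * V t) {t : ℝ} (ht : 0 ≤ t) :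
    V t ≤ V 0 / (1 - σ) * Real.exp (-σ * t / T) := by
  have h1σ : 0 < 1 - σ := sub_pos.2 hσ.2
  have hiter : ∀ n : ℕ, V (n * T) ≤ (1 - σ) ^ n * V 0 := by
    intro n
    induction n with
    | zero => simp
    | succ n ih =>
      calc V ((n + 1 : ℕ) * T) = V (n * T + T) := by push_cast; ring_nf
        _ ≤ (1 - σ) * V (n * T) := hstep _ (by positivity)
        _ ≤ (1 - σ) ^ (n + 1) * V 0 := by
          rw [pow_succ']; exact (mul_le_mul_of_nonneg_left ih h1σ.le).trans_eq (mul_assoc ..).symm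
  set n := ⌊t / T⌋₊
  have hnt : n * T ≤ t := (le_div_iff₀ hT).1 (Nat.floor_le (div_nonneg ht hT.le))
  have hpow : (1 - σ) ^ n * (1 - σ) ≤ Real.exp (-σ * t / T) :=
    calc (1 - σ) ^ n * (1 - σ) = (1 - σ) ^ (n + 1) := (pow_succ _ _).symm
      _ ≤ Real.exp (-σ) ^ (n + 1) := by
        gcongr; linarith [Real.add_one_le_exp (-σ)]
      _ = Real.exp (-σ * (n + 1)) := by rw [← Real.exp_nat_mul]; push_cast; ring_nf
      _ ≤ Real.exp (-σ * t / T) := by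
        rw [Real.exp_le_exp, mul_div_assoc, neg_mul, neg_mul, neg_le_neg_iff]
        exact mul_le_mul_of_nonneg_left (Nat.lt_floor_add_one _).le hσ.1.le
  calc V t ≤ V (n * T) := hanti (by simp; positivity) (by simpa using ht) hnt
    _ ≤ (1 - σ) ^ n * V 0 := hiter n
    _ ≤ Real.exp (-σ * t / T) / (1 - σ) * V 0 := by
        gcongr; rwa [le_div_iff₀ h1σ]
    _ = V 0 / (1 - σ) * Real.exp (-σ * t / T) := by ring

theorem le_sqrt_div_mul_mul_exp {y y₀ lam1 lam2 κ u : ℝ} (hy : 0 ≤ y) (hy₀ : 0 ≤ y₀)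
    (hlam1 : 0 < lam1) (hlam2 : 0 ≤ lam2) (hκ : 0 < κ)
    (h : lam1 * y ^ 2 ≤ lam2 * y₀ ^ 2 / κ * Real.exp (2 * u)) :
    y ≤ Real.sqrt (lam2 / (lam1 * κ)) * y₀ * Real.exp u := by
  refine (pow_le_pow_iff_left₀ hy (by positivity) two_ne_zero).1 ?_
  calc y ^ 2 = lam1 * y ^ 2 / lam1 := by field_simp
    _ ≤ lam2 * y₀ ^ 2 / κ * Real.exp (2 * u) / lam1 := by gcongr
    _ = (Real.sqrt (lam2 / (lam1 * κ)) * y₀ * Real.exp u) ^ 2 := by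
      rw [mul_pow, mul_pow, Real.sq_sqrt (by positivity), ← Real.exp_nat_mul]
      push_cast
      field_simp

theorem stmt15_general
    (d : ℕ) (f : (Fin d → ℝ) → ℝ → (Fin d → ℝ)) (L : ℝ → (Fin d → ℝ) → ℝ)
    (Sig : ℝ → Matrix (Fin d) (Fin d) ℝ)
    (lam1 lam2 lamS γ c T μ : ℝ)
    (hlam1 : 0 < lam1) (hlam2 : 0 < lam2) (hlamS : 0 < lamS)
    (hγ : 0 < γ) (hc : 0 < c) (hT : 0 < T) (hμ : 0 < μ)
    (hSmeas : ∀ i j : Fin d, Measurable fun t => Sig t i j)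
    (hSpsd : ∀ t : ℝ, 0 ≤ t → (Sig t).PosSemidef)
    (hSbound : ∀ t : ℝ, 0 ≤ t → ∀ z : Fin d → ℝ,
      z ⬝ᵥ (Sig t).mulVec z ≤ lamS * (z ⬝ᵥ z))
    -- (b) Σ is persistently exciting with constants T, μ
    (hPE : ∀ t : ℝ, 0 ≤ t →
      ((T⁻¹ • Matrix.of fun i j => ∫ τ in t..(t + T), Sig τ i j) -
        μ • (1 : Matrix (Fin d) (Fin d) ℝ)).PosSemidef)
    -- sandwich bounds on the Lyapunov function
    (hL : ∀ t : ℝ, 0 ≤ t → ∀ z : Fin d → ℝ,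
      lam1 * euclNorm z ^ 2 ≤ L t z ∧ L t z ≤ lam2 * euclNorm z ^ 2)
    -- a solution of ẋ = f(x,t)
    (x : ℝ → (Fin d → ℝ)) (hsol : ∀ t : ℝ, 0 ≤ t → HasDerivAt x (f (x t) t) t)
    -- derivative of 𝓛 along the solution, with bounds (a) and (c)
    (DL : ℝ → ℝ)
    (hLd : ∀ t : ℝ, 0 ≤ t → HasDerivAt (fun s => L s (x s)) (DL t) t)
    (ha : ∀ t : ℝ, 0 ≤ t → DL t ≤ -γ * (x t ⬝ᵥ (Sig t).mulVec (x t)))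
    (hcc : ∀ t : ℝ, 0 ≤ t → DL t ≤ -(1 / c) * euclNorm (f (x t) t) ^ 2) :
    0 < sigmaPE (rhoPE lam2 μ T γ) c T γ lamS ∧
    sigmaPE (rhoPE lam2 μ T γ) c T γ lamS < 1 ∧
    ∀ t : ℝ, 0 ≤ t →
      euclNorm (x t) ≤
        Real.sqrt (lam2 / (lam1 * (1 - sigmaPE (rhoPE lam2 μ T γ) c T γ lamS))) *
          euclNorm (x 0) *
          Real.exp (-(sigmaPE (rhoPE lam2 μ T γ) c T γ lamS) * t / (2 * T)) := by
  set σ := sigmaPE (rhoPE lam2 μ T γ) c T γ lamS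
  set V : ℝ → ℝ := fun s => L s (x s)
  have hσ : σ ∈ Ioo 0 1 :=
    sigmaPE_mem_Ioo (div_pos hlam2 (by positivity)) (by unfold rhoPE; positivity)
  have hanti : AntitoneOn V (Ici 0) :=
    antitoneOn_of_hasDerivAt_nonpos (convex_Ici 0) hLd fun t ht =>
      (hcc t ht).trans (mul_nonpos_of_nonpos_of_nonneg (by simp [hc.le]) (sq_nonneg _))
  have hstep : ∀ a, 0 ≤ a → V (a + T) ≤ (1 - σ) * V a := by
    intro a ha'
    have hsub : ∀ t ∈ Icc a (a + T), 0 ≤ t := fun t ht => ha'.trans ht.1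
    have hSig := intervalIntegrable_apply_of_posSemidef (by linarith) hlamS.le hSmeas
      (fun t ht => hSpsd t (hsub t ht)) (fun t ht => hSbound t (hsub t ht))
    exact le_one_sub_sigmaPE_mul_of_window hlam2 hlamS hγ hc hT hμ hSig
      (fun t ht => hSpsd t (hsub t ht)) (fun t ht => hSbound t (hsub t ht))
      (mul_dotProduct_self_le_integral_of_persistentlyExciting hT hSig (hPE a ha') (x a))
      (euclNorm_sq (x a) ▸ (hL a ha' (x a)).2) (fun t ht => hsol t (hsub t ht))
      (fun t ht => hLd t (hsub t ht)) (fun t ht => ha t (hsub t ht))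
      (fun t ht => hcc t (hsub t ht))
  have hV0 : 0 ≤ V 0 := (by positivity : 0 ≤ lam1 * euclNorm (x 0) ^ 2).trans (hL 0 le_rfl _).1
  refine ⟨hσ.1, hσ.2, fun t ht => le_sqrt_div_mul_mul_exp (euclNorm_nonneg _) (euclNorm_nonneg _)
    hlam1 hlam2.le (sub_pos.2 hσ.2) ?_⟩
  calc lam1 * euclNorm (x t) ^ 2 ≤ V t := (hL t ht _).1
    _ ≤ V 0 / (1 - σ) * Real.exp (-σ * t / T) := hanti.le_div_mul_exp_of_le_mul hT hσ hV0 hstep ht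
    _ = V 0 / (1 - σ) * Real.exp (2 * (-σ * t / (2 * T))) := by field_simp
    _ ≤ lam2 * euclNorm (x 0) ^ 2 / (1 - σ) * Real.exp (2 * (-σ * t / (2 * T))) := by
      gcongr
      · exact (sub_pos.2 hσ.2).le
      · exact (hL 0 le_rfl _).2

/-- Theorem 3: PE-Lyapunov exponential stability.  For `ẋ = f(x,t)` with
`f(0,t) = 0`, a Lyapunov function `λ₁‖x‖² ≤ 𝓛(t,x) ≤ λ₂‖x‖²` whose derivative along the
solution satisfies `d𝓛/dt ≤ −γ xᵀΣ(t)x` and `d𝓛/dt ≤ −(1/c)‖f(x,t)‖²`, with `Σ(t) ≥ 0`,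
`‖Σ(t)‖ ≤ λ_Σ` persistently exciting with constants `T, μ`, the origin is exponentially
stable and `‖x(t)‖ ≤ √(λ₂/(λ₁(1−σ))) ‖x(0)‖ e^{−σt/(2T)}` with
`σ = 1/((1+ρ)(1+ρcT²γλ_Σ))`, `ρ = λ₂/(μTγ)`; in particular `0 < σ < 1`. -/
theorem stmt15
    (d : ℕ) (f : (Fin d → ℝ) → ℝ → (Fin d → ℝ)) (L : ℝ → (Fin d → ℝ) → ℝ)
    (Sig : ℝ → Matrix (Fin d) (Fin d) ℝ)
    (lam1 lam2 lamS γ c T μ : ℝ)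
    (hlam1 : 0 < lam1) (hlam2 : 0 < lam2) (hlamS : 0 < lamS)
    (hγ : 0 < γ) (hc : 0 < c) (hT : 0 < T) (hμ : 0 < μ)
    (hf0 : ∀ t : ℝ, f 0 t = 0)
    (hSmeas : ∀ i j : Fin d, Measurable fun t => Sig t i j)
    (hSpsd : ∀ t : ℝ, 0 ≤ t → (Sig t).PosSemidef)
    (hSbound : ∀ t : ℝ, 0 ≤ t → ∀ z : Fin d → ℝ,
      z ⬝ᵥ (Sig t).mulVec z ≤ lamS * (z ⬝ᵥ z))
    -- (b) Σ is persistently exciting with constants T, μ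
    (hPE : ∀ t : ℝ, 0 ≤ t →
      ((T⁻¹ • Matrix.of fun i j => ∫ τ in t..(t + T), Sig τ i j) -
        μ • (1 : Matrix (Fin d) (Fin d) ℝ)).PosSemidef)
    -- sandwich bounds on the Lyapunov function
    (hL : ∀ t : ℝ, 0 ≤ t → ∀ z : Fin d → ℝ,
      lam1 * euclNorm z ^ 2 ≤ L t z ∧ L t z ≤ lam2 * euclNorm z ^ 2)
    -- a solution of ẋ = f(x,t)
    (x : ℝ → (Fin d → ℝ)) (hsol : ∀ t : ℝ, 0 ≤ t → HasDerivAt x (f (x t) t) t)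
    -- derivative of 𝓛 along the solution, with bounds (a) and (c)
    (DL : ℝ → ℝ)
    (hLd : ∀ t : ℝ, 0 ≤ t → HasDerivAt (fun s => L s (x s)) (DL t) t)
    (ha : ∀ t : ℝ, 0 ≤ t → DL t ≤ -γ * (x t ⬝ᵥ (Sig t).mulVec (x t)))
    (hcc : ∀ t : ℝ, 0 ≤ t → DL t ≤ -(1 / c) * euclNorm (f (x t) t) ^ 2) :
    0 < sigmaPE (rhoPE lam2 μ T γ) c T γ lamS ∧
    sigmaPE (rhoPE lam2 μ T γ) c T γ lamS < 1 ∧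
    ∀ t : ℝ, 0 ≤ t →
      euclNorm (x t) ≤
        Real.sqrt (lam2 / (lam1 * (1 - sigmaPE (rhoPE lam2 μ T γ) c T γ lamS))) *
          euclNorm (x 0) *
          Real.exp (-(sigmaPE (rhoPE lam2 μ T γ) c T γ lamS) * t / (2 * T)) :=
  stmt15_general d f L Sig lam1 lam2 lamS γ c T μ hlam1 hlam2 hlamS hγ hc hT hμ hSmeas hSpsd hSbound
    hPE hL x hsol DL hLd ha hcc
end
end

section
/- Let y₁,…,y_m ∈ ℝ³ be unit vectors (m ≥ 1), k_p, k_d > 0, and set S = Σ_{j=1}^m π_{y_j}. Define A = [[0, −I₃],[k_p S, k_d m I₃]], P = (1/2)·[[I₃, (1/(k_d m)) I₃],[(1/(k_d m)) I₃, I₃]], and Q = [[ (k_p/(k_d m)) S, (k_p/2) S ],[ (k_p/2) S, (k_d m − 1/(k_d m)) I₃ ]]. Then Aᵀ P + P A = Q; consequently, along any solution of ẋ = −A(t) x (with A(t) of this form for time-varying unit vectors y_j(t)), the function 𝓛(t) = x(t)ᵀ P x(t) satisfies d𝓛/dt = −x(t)ᵀ Q(t) x(t). Moreover, if k_d m > 1,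 then P is positive definite. -/
open Matrix

noncomputable section

/-- Projector onto the plane orthogonal to the unit vector `y`: `π_y = I₃ - y yᵀ`. -/
def proj (y : Fin 3 → ℝ) : Matrix (Fin 3) (Fin 3) ℝ := 1 - Matrix.vecMulVec y y

/-- The closed-loop matrix `A = [[0, −I],[k_p S, k_d m I]]` (equation (9)). -/
def AMat (kp kd : ℝ) (m : ℕ) (S : Matrix (Fin 3) (Fin 3) ℝ) :
    Matrix (Fin 3 ⊕ Fin 3) (Fin 3 ⊕ Fin 3) ℝ :=
  Matrix.fromBlocks 0 (-1) (kp • S) ((kd * (m : ℝ)) • 1)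

/-- The Lyapunov matrix `P = (1/2)[[I, (1/(k_d m))I],[(1/(k_d m))I, I]]` (equation (9)). -/
def PMat (kp kd : ℝ) (m : ℕ) : Matrix (Fin 3 ⊕ Fin 3) (Fin 3 ⊕ Fin 3) ℝ :=
  (1 / 2 : ℝ) • Matrix.fromBlocks 1 ((1 / (kd * (m : ℝ))) • 1) ((1 / (kd * (m : ℝ))) • 1) 1

/-- The matrix `Q = [[(k_p/(k_d m))S, (k_p/2)S],[(k_p/2)S, (k_d m − 1/(k_d m))I]]`
(equation (10), with the bottom-right block summed over the `m` neighbors). -/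
def QMat (kp kd : ℝ) (m : ℕ) (S : Matrix (Fin 3) (Fin 3) ℝ) :
    Matrix (Fin 3 ⊕ Fin 3) (Fin 3 ⊕ Fin 3) ℝ :=
  Matrix.fromBlocks ((kp / (kd * (m : ℝ))) • S) ((kp / 2) • S)
    ((kp / 2) • S) ((kd * (m : ℝ) - 1 / (kd * (m : ℝ))) • 1)

/-!
With `c = 1/(k_d m)`, the identity `AᵀP + PA = Q` is a blockwise computation resting on
`c · k_d m = 1` and `Sᵀ = S` (a sum of orthogonal projectors). Differentiating `xᵀPx`
along `ẋ = −Ax` gives `−xᵀ(AᵀP + PA)x`. Finally `2P = (1 − c)·I + c·[[I, I], [I, I]]` is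
positive definite for `0 ≤ c < 1`, since `[[I, I], [I, I]]` is positive semidefinite (its Schur
complement vanishes).
-/

lemma proj_transpose (y : Fin 3 → ℝ) : (proj y)ᵀ = proj y := by
  simp [proj, transpose_sub, transpose_vecMulVec]

lemma AMat_transpose_mul_PMat_add_PMat_mul_AMat (kp kd : ℝ) (m : ℕ)
    {S : Matrix (Fin 3) (Fin 3) ℝ} (hS : Sᵀ = S) (hkdm : kd * (m : ℝ) ≠ 0) :
    (AMat kp kd m S)ᵀ * PMat kp kd m + PMat kp kd m * AMat kp kd m S = QMat kp kd m S := by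
  have hkd : kd ≠ 0 := left_ne_zero_of_mul hkdm
  have hm0 : (m : ℝ) ≠ 0 := right_ne_zero_of_mul hkdm
  rw [AMat, PMat, QMat, Matrix.mul_smul, Matrix.smul_mul, fromBlocks_transpose,
    fromBlocks_multiply, fromBlocks_multiply, ← smul_add, fromBlocks_add, fromBlocks_smul,
    fromBlocks_inj]
  refine ⟨?_, ?_, ?_, ?_⟩ <;> ext i j <;>
    simp only [hS, transpose_zero, transpose_neg, transpose_one, transpose_smul, one_div,
      _root_.mul_inv_rev, Algebra.mul_smul_comm, Algebra.smul_mul_assoc, mul_one, one_mul, mul_zero,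
      mul_neg, smul_zero, smul_neg, zero_add, Matrix.smul_apply, Matrix.add_apply,
      Matrix.neg_apply, Matrix.one_apply, smul_eq_mul, mul_ite] <;>
    (try split_ifs) <;> field_simp <;> ring

section Calculus

variable {ι : Type*} [Fintype ι] {f g : ℝ → ι → ℝ} {f' g' : ι → ℝ} {t : ℝ}

theorem HasDerivAt.dotProduct (hf : HasDerivAt f f' t) (hg : HasDerivAt g g' t) :
    HasDerivAt (fun s => f s ⬝ᵥ g s) (f' ⬝ᵥ g t + f t ⬝ᵥ g') t := by
  have hsum := HasDerivAt.fun_sum (u := Finset.univ) fun i _ =>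
    (hasDerivAt_pi.1 hf i).fun_mul (hasDerivAt_pi.1 hg i)
  exact hsum.congr_deriv Finset.sum_add_distrib

theorem HasDerivAt.mulVec (P : Matrix ι ι ℝ) (hf : HasDerivAt f f' t) :
    HasDerivAt (fun s => P *ᵥ f s) (P *ᵥ f') t :=
  (Matrix.mulVecLin P).toContinuousLinearMap.hasFDerivAt.comp_hasDerivAt t hf

theorem HasDerivAt.dotProduct_mulVec_of_neg_mulVec (A P : Matrix ι ι ℝ) {x : ℝ → ι → ℝ}
    (hx : HasDerivAt x (-(A *ᵥ x t)) t) :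
    HasDerivAt (fun s => x s ⬝ᵥ P *ᵥ x s) (-(x t ⬝ᵥ (Aᵀ * P + P * A) *ᵥ x t)) t := by
  convert hx.dotProduct (hx.mulVec P) using 1
  rw [add_mulVec, ← mulVec_mulVec, ← mulVec_mulVec, dotProduct_add, dotProduct_mulVec,
    vecMul_transpose, mulVec_neg, neg_dotProduct, dotProduct_neg, dotProduct_comm (A *ᵥ x t)]
  abel

end Calculus

lemma posDef_fromBlocks_one_smul_one {n : Type*} [Fintype n] [DecidableEq n] {c : ℝ}
    (hc₀ : 0 ≤ c) (hc₁ : c < 1) :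
    (fromBlocks 1 (c • 1) (c • 1) 1 : Matrix (n ⊕ n) (n ⊕ n) ℝ).PosDef := by
  have : Invertible (1 : Matrix n n ℝ) := invertibleOne
  have hJ : (fromBlocks 1 1 1 1 : Matrix (n ⊕ n) (n ⊕ n) ℝ).PosSemidef := by
    simpa using
      (PosDef.fromBlocks₁₁ (1 : Matrix n n ℝ) 1 PosDef.one).2 (by simp [PosSemidef.zero])
  have hsplit : (fromBlocks 1 (c • 1) (c • 1) 1 : Matrix (n ⊕ n) (n ⊕ n) ℝ) =
      (1 - c) • 1 + c • fromBlocks 1 1 1 1 := by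
    rw [← fromBlocks_one, fromBlocks_smul, fromBlocks_smul, fromBlocks_add]
    congr 1 <;> module
  rw [hsplit]
  exact (PosDef.one.smul (sub_pos.2 hc₁)).add_posSemidef (hJ.smul hc₀)

lemma PMat_posDef (kp kd : ℝ) (m : ℕ) (hkdm : 1 < kd * (m : ℝ)) : (PMat kp kd m).PosDef :=
  (posDef_fromBlocks_one_smul_one (by positivity) ((div_lt_one (by linarith)).2 hkdm)).smul
    (by norm_num)

theorem stmt19_general
    (m : ℕ) (hm : 1 ≤ m) (kp kd : ℝ) (hkd : 0 < kd)
    (y : Fin m → ℝ → (Fin 3 → ℝ)) :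
    -- the algebraic identity AᵀP + PA = Q, for every t
    (∀ t : ℝ,
      (AMat kp kd m (∑ j, proj (y j t)))ᵀ * PMat kp kd m +
        PMat kp kd m * AMat kp kd m (∑ j, proj (y j t)) =
      QMat kp kd m (∑ j, proj (y j t))) ∧
    -- the Lyapunov derivative along any solution of ẋ = −A(t)x
    (∀ x : ℝ → (Fin 3 ⊕ Fin 3 → ℝ),
      (∀ t : ℝ, HasDerivAt x (-(AMat kp kd m (∑ j, proj (y j t))).mulVec (x t)) t) →
      ∀ t : ℝ,
        HasDerivAt (fun s => x s ⬝ᵥ (PMat kp kd m).mulVec (x s))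
          (-(x t ⬝ᵥ (QMat kp kd m (∑ j, proj (y j t))).mulVec (x t))) t) ∧
    -- positive definiteness of P when k_d m > 1
    (kd * (m : ℝ) > 1 → (PMat kp kd m).PosDef) := by
  have hkdm : kd * (m : ℝ) ≠ 0 := by
    have : (0 : ℝ) < m := by exact_mod_cast hm
    positivity
  have hS : ∀ t, (∑ j, proj (y j t))ᵀ = ∑ j, proj (y j t) := fun t => by
    simp only [transpose_sum, proj_transpose]
  have hLyap := fun t => AMat_transpose_mul_PMat_add_PMat_mul_AMat kp kd m (hS t) hkdm
  refine ⟨hLyap, fun x hx t => ?_, PMat_posDef kp kd m⟩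
  rw [← hLyap t]
  exact (hx t).dotProduct_mulVec_of_neg_mulVec _ _

/-- the Lyapunov identity `AᵀP + PA = Q`; consequently, along any solution
of `ẋ = −A(t)x` with time-varying unit vectors `y_j(t)`, `𝓛(t) = x(t)ᵀPx(t)` satisfies
`d𝓛/dt = −x(t)ᵀQ(t)x(t)`.  Moreover `P` is positive definite whenever `k_d m > 1`. -/
theorem stmt19
    (m : ℕ) (hm : 1 ≤ m) (kp kd : ℝ) (hkp : 0 < kp) (hkd : 0 < kd)
    (y : Fin m → ℝ → (Fin 3 → ℝ)) (hy : ∀ j, ∀ t : ℝ, y j t ⬝ᵥ y j t = 1) :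
    -- the algebraic identity AᵀP + PA = Q, for every t
    (∀ t : ℝ,
      (AMat kp kd m (∑ j, proj (y j t)))ᵀ * PMat kp kd m +
        PMat kp kd m * AMat kp kd m (∑ j, proj (y j t)) =
      QMat kp kd m (∑ j, proj (y j t))) ∧
    -- the Lyapunov derivative along any solution of ẋ = −A(t)x
    (∀ x : ℝ → (Fin 3 ⊕ Fin 3 → ℝ),
      (∀ t : ℝ, HasDerivAt x (-(AMat kp kd m (∑ j, proj (y j t))).mulVec (x t)) t) →
      ∀ t : ℝ,
        HasDerivAt (fun s => x s ⬝ᵥ (PMat kp kd m).mulVec (x s))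
          (-(x t ⬝ᵥ (QMat kp kd m (∑ j, proj (y j t))).mulVec (x t))) t) ∧
    -- positive definiteness of P when k_d m > 1
    (kd * (m : ℝ) > 1 → (PMat kp kd m).PosDef) :=
  stmt19_general m hm kp kd hkd y
end
end
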